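/- Let a₀, a₁ ≥ 0 be real numbers with a₀ + a₁ > 0, and let n ≥ 3. Let T_n be the n×n lower bidiagonal Toeplitz matrix with diagonal entries a₀ and first subdiagonal entries a₁. Then ‖T_n‖ ≤ (a₀ + a₁) − 8·(2 − √2)·a₀·a₁ / ((a₀ + a₁)·(n+1)²). In particular, for the symbol a(z) = a₀ + a₁ z, whose sup norm over the unit circle equals a₀ + a₁, the gap ‖a‖∞ − ‖T_n(a)‖ is bounded below by 8(2−√2) a₀ a₁ / ((a₀+a₁)(n+1)²), so the O(1/n²) rate of convergence of finite Toeplitz sections cannot be improved in general. -/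

import Mathlib

/-!
The `j`-th entry of `T_n x` is `a₀ x_j + a₁ x_{j-1}` (with `x_{-1} = 0`), so for `y_j = |x_j|`
`‖T_n x‖² ≤ (a₀² + a₁²) ‖y‖² + 2 a₀ a₁ ∑ y_{j-1} y_j`. The last sum is at most
`cos (π / (n+1)) ‖y‖²`, the top eigenvalue of the halved adjacency matrix of the path on `n`
vertices: weighted AM-GM with the weights `sin ((j+1) π / (n+1))` of its Perron eigenvector proves
it. Hence `‖T_n‖² ≤ (a₀ + a₁)² - 2 a₀ a₁ (1 - cos (π / (n+1)))`, so
`‖T_n‖ ≤ (a₀ + a₁) - a₀ a₁ (1 - cos (π / (n+1))) / (a₀ + a₁)`, and concavity of `sin` on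
`[0, π/8]` gives `1 - cos (π / N) ≥ 8 (2 - √2) / N²` for `N ≥ 4`.
-/

open scoped Real

/-- The `n × n` Toeplitz matrix of a sequence `a : ℤ → ℂ`, with `(j,k)` entry `a (j - k)`. -/
noncomputable def toeplitz (a : ℤ → ℂ) (n : ℕ) : Matrix (Fin n) (Fin n) ℂ :=
  fun j k => a ((j : ℤ) - (k : ℤ))

/-- The operator norm of the `n × n` Toeplitz matrix of `a`, as a linear map on
Euclidean space `ℂ^n`. -/
noncomputable def toeplitzNorm (a : ℤ → ℂ) (n : ℕ) : ℝ :=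
  ‖Matrix.toEuclideanCLM (𝕜 := ℂ) (toeplitz a n)‖

/-- The symbol `a(e^{iθ}) = ∑_{k ∈ ℤ} a_k e^{ikθ}` of a sequence `a : ℤ → ℂ`. -/
noncomputable def symbol (a : ℤ → ℂ) (θ : ℝ) : ℂ :=
  ∑' k : ℤ, a k * Complex.exp (Complex.I * k * θ)

/-- `‖a‖_∞ = sup_{θ ∈ [-π, π]} |a(e^{iθ})|`. -/
noncomputable def symbolSup (a : ℤ → ℂ) : ℝ :=
  sSup ((fun θ => ‖symbol a θ‖) '' Set.Icc (-π) π)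

open Finset Real Matrix

theorem mul_le_weighted_sq_add {A B : ℝ} (hA : 0 < A) (hB : 0 < B) (u v : ℝ) :
    u * v ≤ (u ^ 2 * (B / A) + v ^ 2 * (A / B)) / 2 := by
  have key : 0 ≤ (u * B - v * A) ^ 2 / (A * B) := by positivity
  have expand : (u ^ 2 * (B / A) + v ^ 2 * (A / B)) / 2 - u * v
      = (u * B - v * A) ^ 2 / (A * B) / 2 := by
    field_simp
    ring
  linarith

theorem sum_mul_succ_le_cos_mul_sum_sq (m : ℕ) (Y : ℕ → ℝ) :
    ∑ j ∈ range m, Y j * Y (j + 1) ≤ cos (π / (m + 2)) * ∑ j ∈ range (m + 1), Y j ^ 2 := by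
  set t := π / (m + 2)
  set s : ℕ → ℝ := fun j => sin (j * t) with hs
  have hs_pos : ∀ j, 1 ≤ j → j ≤ m + 1 → 0 < s j := by
    intro j hj1 hjm
    refine sin_pos_of_pos_of_lt_pi (by positivity) ?_
    have : (j : ℝ) < m + 2 := by exact_mod_cast Nat.lt_succ_of_le hjm
    calc (j : ℝ) * t < (m + 2) * t := by gcongr
      _ = π := mul_div_cancel₀ _ (by positivity)
  have hs_zero : s 0 = 0 := by simp [hs]
  have hs_last : s (m + 2) = 0 := by
    simp only [hs, t]; push_cast; rw [mul_div_cancel₀ _ (by positivity), sin_pi]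
  have hs_rec : ∀ j, s (j + 2) + s j = 2 * cos t * s (j + 1) := by
    intro j
    simp only [hs]; push_cast
    rw [show ((j : ℝ) + 2) * t = (j + 1) * t + t by ring,
      show (j : ℝ) * t = (j + 1) * t - t by ring, sin_add, sin_sub]
    ring
  set f : ℕ → ℝ := fun j => Y j ^ 2 * (s (j + 2) / s (j + 1)) / 2
  set g : ℕ → ℝ := fun j => Y j ^ 2 * (s j / s (j + 1)) / 2
  have hfg : ∀ j ∈ range (m + 1), f j + g j = cos t * Y j ^ 2 := by
    intro j hj
    have := (hs_pos (j + 1) (by omega) (by simpa using hj)).ne'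
    simp only [f, g]
    field_simp
    linear_combination Y j ^ 2 * hs_rec j
  calc ∑ j ∈ range m, Y j * Y (j + 1)
      ≤ ∑ j ∈ range m, (f j + g (j + 1)) := by
        refine sum_le_sum fun j hj => ?_
        have hj := mem_range.1 hj
        simpa [f, g, add_div] using
          mul_le_weighted_sq_add (hs_pos (j + 1) (by omega) (by omega))
            (hs_pos (j + 2) (by omega) (by omega)) (Y j) (Y (j + 1))
    _ = ∑ j ∈ range (m + 1), (f j + g j) := by
        rw [sum_add_distrib, sum_add_distrib, sum_range_succ f, sum_range_succ' g]
        simp only [f, g, hs_zero, hs_last]; ring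
    _ = cos t * ∑ j ∈ range (m + 1), Y j ^ 2 := by rw [sum_congr rfl hfg, mul_sum]

theorem sum_sq_bidiag_le {p q : ℝ} (hp : 0 ≤ p) (hq : 0 ≤ q) {Y : ℕ → ℝ} (hY : Y 0 = 0) (m : ℕ) :
    ∑ j ∈ range (m + 1), (p * Y (j + 1) + q * Y j) ^ 2
      ≤ (p ^ 2 + q ^ 2 + 2 * p * q * cos (π / (m + 2))) * ∑ j ∈ range (m + 1), Y (j + 1) ^ 2 := by
  set S := ∑ j ∈ range (m + 1), Y (j + 1) ^ 2
  have hshift : ∑ j ∈ range (m + 1), Y j ^ 2 ≤ S := by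
    rw [sum_range_succ', hY, show S = _ from sum_range_succ _ m]
    nlinarith [sq_nonneg (Y (m + 1))]
  have hcross : ∑ j ∈ range (m + 1), Y j * Y (j + 1) ≤ cos (π / (m + 2)) * S := by
    rw [sum_range_succ', hY, zero_mul, add_zero]
    exact sum_mul_succ_le_cos_mul_sum_sq m (fun j => Y (j + 1))
  have hexpand : ∑ j ∈ range (m + 1), (p * Y (j + 1) + q * Y j) ^ 2
      = p ^ 2 * S + q ^ 2 * ∑ j ∈ range (m + 1), Y j ^ 2
        + 2 * p * q * ∑ j ∈ range (m + 1), Y j * Y (j + 1) := by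
    simp only [S, mul_sum, ← sum_add_distrib]
    exact sum_congr rfl fun j _ => by ring
  rw [hexpand]
  nlinarith [mul_le_mul_of_nonneg_left hshift (sq_nonneg q),
    mul_le_mul_of_nonneg_left hcross (by positivity : 0 ≤ 2 * p * q)]

theorem mul_sin_le_sin_mul {t x : ℝ} (ht₀ : 0 ≤ t) (ht₁ : t ≤ 1) (hx₀ : 0 ≤ x) (hx : x ≤ π) :
    t * sin x ≤ sin (t * x) := by
  simpa using strictConcaveOn_sin_Icc.concaveOn.2 ⟨hx₀, hx⟩ ⟨le_rfl, pi_pos.le⟩ ht₀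
    (sub_nonneg.2 ht₁) (add_sub_cancel t 1)

theorem le_one_sub_cos_pi_div {N : ℝ} (hN : 4 ≤ N) :
    8 * (2 - √2) / N ^ 2 ≤ 1 - cos (π / N) := by
  have hN₀ : 0 < N := by linarith
  -- equality at `N = 4`: this is where the constant `8 (2 - √2)` comes from
  have hsin : 4 / N * (√(2 - √2) / 2) ≤ sin (π / N / 2) := by
    rw [← sin_pi_div_eight, show π / N / 2 = 4 / N * (π / 8) by field_simp; ring]
    exact mul_sin_le_sin_mul (by positivity) ((div_le_one hN₀).2 hN) (by positivity)
      (by linarith [pi_pos])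
  have hsq : 4 * (2 - √2) / N ^ 2 ≤ sin (π / N / 2) ^ 2 := by
    have h2 : 0 ≤ 2 - √2 := sub_nonneg.2 (sqrt_le_iff.2 ⟨by norm_num, by norm_num⟩)
    calc 4 * (2 - √2) / N ^ 2 = (4 / N * (√(2 - √2) / 2)) ^ 2 := by
          rw [mul_pow, div_pow, div_pow, sq_sqrt h2]; ring
      _ ≤ _ := pow_le_pow_left₀ (by positivity) hsin 2
  have hcos : 1 - cos (π / N) = 2 * sin (π / N / 2) ^ 2 := by
    rw [sin_sq_eq_half_sub, mul_div_cancel₀ _ two_ne_zero]; ring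
  rw [hcos, show 8 * (2 - √2) / N ^ 2 = 2 * (4 * (2 - √2) / N ^ 2) by ring]
  linarith

theorem sqrt_sq_add_sq_add_mul_cos_le {p q c : ℝ} (hp : 0 ≤ p) (hq : 0 ≤ q) (hc : -1 ≤ c) :
    √(p ^ 2 + q ^ 2 + 2 * p * q * c) ≤ (p + q) - p * q * (1 - c) / (p + q) := by
  rcases (add_nonneg hp hq).eq_or_lt with hs | hs
  · obtain ⟨rfl, rfl⟩ : p = 0 ∧ q = 0 := ⟨by linarith, by linarith⟩
    simp
  set d := p * q * (1 - c) / (p + q)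
  have hd : d * (p + q) = p * q * (1 - c) := div_mul_cancel₀ _ hs.ne'
  rw [sqrt_le_iff]
  constructor <;> nlinarith [sq_nonneg (p - q), sq_nonneg d, mul_nonneg hp hq]

def bidiagSeq (b₀ b₁ : ℂ) : ℤ → ℂ := fun k => if k = 0 then b₀ else if k = 1 then b₁ else 0

def shiftSeq {n : ℕ} (x : Fin n → ℂ) : ℕ → ℂ
  | 0 => 0
  | k + 1 => if h : k < n then x ⟨k, h⟩ else 0

theorem shiftSeq_succ {n : ℕ} (x : Fin n → ℂ) (j : Fin n) : shiftSeq x (j + 1) = x j := by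
  simp [shiftSeq]

theorem toeplitz_bidiagSeq_mulVec_apply (b₀ b₁ : ℂ) {n : ℕ} (x : Fin n → ℂ) (j : Fin n) :
    (toeplitz (bidiagSeq b₀ b₁) n *ᵥ x) j = b₀ * shiftSeq x (j + 1) + b₁ * shiftSeq x j := by
  have hentry : ∀ k : Fin n, toeplitz (bidiagSeq b₀ b₁) n j k * x k
      = (if k = j then b₀ * x k else 0) + (if (k : ℕ) + 1 = j then b₁ * x k else 0) := by
    intro k
    simp only [toeplitz, bidiagSeq, Fin.ext_iff]
    split_ifs <;> first | omega | ring
  simp only [Matrix.mulVec, dotProduct, hentry, sum_add_distrib, sum_ite_eq', mem_univ, if_true,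
    shiftSeq_succ]
  congr 1
  rcases j with ⟨_ | i, hi⟩
  · simp [shiftSeq]
  · have : ∀ k : Fin n, (k : ℕ) = i ↔ k = ⟨i, by omega⟩ := fun k => by
      rw [Fin.ext_iff]
    simp [shiftSeq, show i < n by omega, this]

theorem norm_toeplitz_bidiagSeq_mulVec_apply_le (b₀ b₁ : ℂ) {n : ℕ} (x : Fin n → ℂ) (j : Fin n) :
    ‖(toeplitz (bidiagSeq b₀ b₁) n *ᵥ x) j‖
      ≤ ‖b₀‖ * ‖shiftSeq x (j + 1)‖ + ‖b₁‖ * ‖shiftSeq x j‖ := by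
  rw [toeplitz_bidiagSeq_mulVec_apply, ← norm_mul, ← norm_mul]
  exact norm_add_le _ _

theorem toeplitzNorm_bidiagSeq_le (b₀ b₁ : ℂ) (m : ℕ) :
    toeplitzNorm (bidiagSeq b₀ b₁) (m + 1)
      ≤ √(‖b₀‖ ^ 2 + ‖b₁‖ ^ 2 + 2 * ‖b₀‖ * ‖b₁‖ * cos (π / (m + 2))) := by
  have hrad : 0 ≤ ‖b₀‖ ^ 2 + ‖b₁‖ ^ 2 + 2 * ‖b₀‖ * ‖b₁‖ * cos (π / (m + 2)) := by
    nlinarith [neg_one_le_cos (π / (m + 2)), sq_nonneg (‖b₀‖ - ‖b₁‖),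
      mul_nonneg (norm_nonneg b₀) (norm_nonneg b₁)]
  refine ContinuousLinearMap.opNorm_le_bound _ (sqrt_nonneg _) fun x => ?_
  set Y : ℕ → ℝ := fun k => ‖shiftSeq x.ofLp k‖
  have hx : ‖x‖ ^ 2 = ∑ j ∈ range (m + 1), Y (j + 1) ^ 2 := by
    rw [EuclideanSpace.norm_sq_eq, ← Fin.sum_univ_eq_sum_range (fun j => Y (j + 1) ^ 2)]
    simp [Y, shiftSeq_succ]
  have hTx : ‖toEuclideanCLM (𝕜 := ℂ) (toeplitz (bidiagSeq b₀ b₁) (m + 1)) x‖ ^ 2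
      ≤ ∑ j ∈ range (m + 1), (‖b₀‖ * Y (j + 1) + ‖b₁‖ * Y j) ^ 2 := by
    rw [EuclideanSpace.norm_sq_eq,
      ← Fin.sum_univ_eq_sum_range (fun j => (‖b₀‖ * Y (j + 1) + ‖b₁‖ * Y j) ^ 2)]
    gcongr with j
    exact norm_toeplitz_bidiagSeq_mulVec_apply_le b₀ b₁ x.ofLp j
  have hbound :=
    sum_sq_bidiag_le (norm_nonneg b₀) (norm_nonneg b₁) (Y := Y) (by simp [Y, shiftSeq]) m
  rw [← pow_le_pow_iff_left₀ (norm_nonneg _) (by positivity) two_ne_zero, mul_pow,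
    sq_sqrt hrad, hx]
  exact hTx.trans hbound

theorem stmt13_general (a₀ a₁ : ℝ) (h₀ : 0 ≤ a₀) (h₁ : 0 ≤ a₁)
    (n : ℕ) (hn : 3 ≤ n) :
    toeplitzNorm (fun k : ℤ => if k = 0 then (a₀ : ℂ) else if k = 1 then (a₁ : ℂ) else 0) n ≤
      (a₀ + a₁) - 8 * (2 - Real.sqrt 2) * a₀ * a₁ / ((a₀ + a₁) * (n + 1) ^ 2) := by
  obtain ⟨m, rfl⟩ : ∃ m, n = m + 1 := ⟨n - 1, by omega⟩
  have hnorm := toeplitzNorm_bidiagSeq_le a₀ a₁ m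
  rw [Complex.norm_of_nonneg h₀, Complex.norm_of_nonneg h₁] at hnorm
  have hgap := le_one_sub_cos_pi_div (N := m + 2) (by norm_cast; omega)
  calc _ ≤ _ := hnorm
    _ ≤ (a₀ + a₁) - a₀ * a₁ * (1 - cos (π / (m + 2))) / (a₀ + a₁) :=
        sqrt_sq_add_sq_add_mul_cos_le h₀ h₁ (neg_one_le_cos _)
    _ ≤ _ := by
        rw [mul_comm (a₀ + a₁), ← div_div,
          show 8 * (2 - √2) * a₀ * a₁ / (((m + 1 : ℕ) : ℝ) + 1) ^ 2
            = a₀ * a₁ * (8 * (2 - √2) / (m + 2) ^ 2) by push_cast; ring]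
        gcongr

theorem stmt13 (a₀ a₁ : ℝ) (h₀ : 0 ≤ a₀) (h₁ : 0 ≤ a₁) (hsum : 0 < a₀ + a₁)
    (n : ℕ) (hn : 3 ≤ n) :
    toeplitzNorm (fun k : ℤ => if k = 0 then (a₀ : ℂ) else if k = 1 then (a₁ : ℂ) else 0) n ≤
      (a₀ + a₁) - 8 * (2 - Real.sqrt 2) * a₀ * a₁ / ((a₀ + a₁) * (n + 1) ^ 2) :=
  stmt13_general a₀ a₁ h₀ h₁ n hn
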